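/- Suppose f : ℝ → ℝ is locally integrable with f(t) − σ > 0 for almost every t ∈ ℝ, where σ ≥ 0. If the firing map value Φ(t₀) is defined (satisfying e^{σt₀} = ∫_{t₀}^{Φ(t₀)} (f(u)−σ) e^{σu} du), then for every s < t₀ the value Φ(s) is defined and Φ(s) < Φ(t₀). In other words, the firing map is strictly increasing where defined. -/

import Mathlib

/-!
Integrating from `s`, the primitive `F t = ∫_s^t (f u - σ) e^{σ u} du` is continuous and, since the
integrand is a.e. positive, strictly increasing. Hence `F y₀ = F t₀ + e^{σ t₀} > e^{σ s}` (using
`σ ≥ 0`), while `F s = 0`, so `F` crosses the level `e^{σ s}` exactly once, at some point of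
`(s, y₀)`; being the only crossing, it is the least one.
-/

open MeasureTheory Filter Set intervalIntegral

noncomputable section

/-- A set `A ⊆ ℝ` is relatively dense. -/
def RelDense (A : Set ℝ) : Prop := ∃ l > 0, ∀ x : ℝ, ∃ τ ∈ A, x < τ ∧ τ < x + l

/-- The set over which the infimum defining the LIF firing map is taken. -/
def FiringSet (σ : ℝ) (f : ℝ → ℝ) (t : ℝ) : Set ℝ :=
  {t' | t < t' ∧ Real.exp (σ * t) ≤ ∫ u in t..t', (f u - σ) * Real.exp (σ * u)}

/-- `y` is the firing-map value at `t`: the smallest `t' > t` with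
`e^{σ t} = ∫_t^{t'} (f u - σ) e^{σ u} du`. -/
def FiringEq (σ : ℝ) (f : ℝ → ℝ) (t y : ℝ) : Prop :=
  IsLeast {t' | t < t' ∧ Real.exp (σ * t) = ∫ u in t..t', (f u - σ) * Real.exp (σ * u)} y

/-- The Stepanov `S¹` seminorm. -/
def SNorm (f : ℝ → ℝ) : ℝ := ⨆ t : ℝ, ∫ u in t..(t + 1), |f u|

/-- Stepanov `S¹`-almost periodicity. -/
def S1AP (f : ℝ → ℝ) : Prop :=
  ∀ ε > 0, RelDense {τ | SNorm (fun u => f (u + τ) - f u) < ε}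

/-- `D(η; f, g) = sup_u μ({t ∈ [u,u+1] : |f t - g t| ≥ η})`. -/
def Dfun (η : ℝ) (f g : ℝ → ℝ) : ℝ :=
  ⨆ u : ℝ, (volume {t ∈ Set.Icc u (u + 1) | η ≤ |f t - g t|}).toReal

/-- Almost periodicity in the Lebesgue measure (μ-almost periodicity). -/
def MuAP (f : ℝ → ℝ) : Prop :=
  ∀ ε > 0, ∀ η > 0, RelDense {τ | Dfun η (fun t => f (t + τ)) f ≤ ε}

/-- Bohr (uniform) almost periodicity. -/
def BohrAP (g : ℝ → ℝ) : Prop :=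
  Continuous g ∧ ∀ ε > 0, RelDense {τ | (⨆ t : ℝ, |g (t + τ) - g t|) < ε}

/-- Limit-periodicity: `g` is a uniform limit of continuous periodic functions. -/
def LimitPeriodic (g : ℝ → ℝ) : Prop :=
  ∃ gn : ℕ → ℝ → ℝ, (∀ n, Continuous (gn n) ∧ ∃ p > 0, Function.Periodic (gn n) p) ∧
    TendstoUniformly gn g atTop

theorem MeasureTheory.LocallyIntegrable.intervalIntegrable {E : Type*} [NormedAddCommGroup E]
    {μ : Measure ℝ} {g : ℝ → E} (hg : LocallyIntegrable g μ) (a b : ℝ) :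
    IntervalIntegrable g μ a b :=
  (hg.integrableOn_isCompact isCompact_uIcc).intervalIntegrable

theorem intervalIntegral_pos_of_ae_pos {g : ℝ → ℝ} {a b : ℝ}
    (hg : IntervalIntegrable g volume a b) (hpos : ∀ᵐ t, 0 < g t) (hab : a < b) :
    0 < ∫ u in a..b, g u := by
  rw [integral_pos_iff_support_of_nonneg_ae (hpos.mono fun _ ht => ht.le) hg]
  have hsupport : (Function.support g ∩ Ioc a b : Set ℝ) =ᵐ[volume] Ioc a b := by
    rw [eventuallyEq_set]
    filter_upwards [hpos] with t ht
    simp [Function.mem_support, ht.ne']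
  rw [measure_congr hsupport, Real.volume_Ioc]
  exact ⟨hab, ENNReal.ofReal_pos.2 (sub_pos.2 hab)⟩

theorem strictMono_integral_of_ae_pos {g : ℝ → ℝ} (hg : LocallyIntegrable g volume)
    (hpos : ∀ᵐ t, 0 < g t) (a : ℝ) : StrictMono fun t => ∫ u in a..t, g u := by
  intro x y hxy
  rw [← sub_pos,
    integral_interval_sub_left (hg.intervalIntegrable a y) (hg.intervalIntegrable a x)]
  exact intervalIntegral_pos_of_ae_pos (hg.intervalIntegrable x y) hpos hxy

theorem firingEq_of_strictMono {σ : ℝ} {f : ℝ → ℝ} {s c : ℝ}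
    (hmono : StrictMono fun t => ∫ u in s..t, (f u - σ) * Real.exp (σ * u)) (hsc : s < c)
    (hc : Real.exp (σ * s) = ∫ u in s..c, (f u - σ) * Real.exp (σ * u)) :
    FiringEq σ f s c :=
  ⟨⟨hsc, hc⟩, fun _ ht => (hmono.injective (ht.2.symm.trans hc)).ge⟩

theorem stmt2 (σ : ℝ) (hσ : 0 ≤ σ) (f : ℝ → ℝ) (hf : LocallyIntegrable f volume)
    (hpos : ∀ᵐ t, σ < f t) (t₀ y₀ : ℝ) (h : FiringEq σ f t₀ y₀) :
    ∀ s < t₀, ∃ y, FiringEq σ f s y ∧ y < y₀ := by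
  intro s hs
  obtain ⟨⟨ht₀y₀, hy₀⟩, -⟩ := h
  set g : ℝ → ℝ := fun u => (f u - σ) * Real.exp (σ * u)
  have hg : LocallyIntegrable g volume :=
    (hf.sub (locallyIntegrable_const σ)).mul_continuous (by fun_prop)
  have hgpos : ∀ᵐ t, 0 < g t := hpos.mono fun t ht => mul_pos (sub_pos.2 ht) (Real.exp_pos _)
  set F : ℝ → ℝ := fun t => ∫ u in s..t, g u
  have hFcont : Continuous F := continuous_primitive hg.intervalIntegrable s
  have hFs : F s = 0 := integral_same
  have hFy₀ : Real.exp (σ * s) < F y₀ :=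
    calc Real.exp (σ * s) ≤ Real.exp (σ * t₀) :=
          Real.exp_le_exp.2 (mul_le_mul_of_nonneg_left hs.le hσ)
      _ = ∫ u in t₀..y₀, g u := hy₀
      _ < F t₀ + ∫ u in t₀..y₀, g u :=
        lt_add_of_pos_left _ (intervalIntegral_pos_of_ae_pos (hg.intervalIntegrable s t₀) hgpos hs)
      _ = F y₀ := integral_add_adjacent_intervals (hg.intervalIntegrable _ _)
        (hg.intervalIntegrable _ _)
  obtain ⟨c, ⟨hsc, hcy₀⟩, hc⟩ := intermediate_value_Ioo (hs.trans ht₀y₀).le hFcont.continuousOn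
    ⟨hFs ▸ Real.exp_pos _, hFy₀⟩
  exact ⟨c, firingEq_of_strictMono (strictMono_integral_of_ae_pos hg hgpos s) hsc hc.symm, hcy₀⟩
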